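/- arXiv:math-ph/0110029 — 2 statements merged into one kernel-verified Lean document; each statement's English description precedes it below -/
import Mathlib

section
/- If h solves h³(h'' + h') = 1 on [t₀,∞) with h(t₀) = h₀ > 0, then there exists T ≥ t₀ such that h'(t) > 0 for all t > T. -/
open Set

section IciCalculus

variable {f f' : ℝ → ℝ} {a : ℝ}

lemma monotoneOn_Ici_of_hasDerivAt_nonneg (hf : ∀ x ∈ Ici a, HasDerivAt f (f' x) x)
    (hf' : ∀ x ∈ Ici a, 0 ≤ f' x) : MonotoneOn f (Ici a) :=
  monotoneOn_of_hasDerivWithinAt_nonneg (convex_Ici a)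
    (fun x hx ↦ (hf x hx).continuousAt.continuousWithinAt)
    (fun x hx ↦ (hf x (interior_subset hx)).hasDerivWithinAt)
    (fun x hx ↦ hf' x (interior_subset hx))

lemma antitoneOn_Ici_of_deriv_nonpos (hf : ∀ x ∈ Ici a, DifferentiableAt ℝ f x)
    (hf' : ∀ x ∈ Ici a, deriv f x ≤ 0) : AntitoneOn f (Ici a) := by
  have hneg : MonotoneOn (-f) (Ici a) :=
    monotoneOn_Ici_of_hasDerivAt_nonneg (fun x hx ↦ (hf x hx).hasDerivAt.neg)
      (fun x hx ↦ neg_nonneg.2 (hf' x hx))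
  exact fun x hx y hy hxy ↦ neg_le_neg_iff.1 (hneg hx hy hxy)

end IciCalculus

section DampedOscillator

variable {f : ℝ → ℝ} {a : ℝ}

/-- `(eᵗ f')' = eᵗ (f'' + f')`, so `f'' + f' ≥ 0` makes `eᵗ f'` nondecreasing. -/
lemma deriv_pos_of_deriv_deriv_add_deriv_nonneg
    (hdf' : ∀ t ∈ Ici a, DifferentiableAt ℝ (deriv f) t)
    (hf : ∀ t ∈ Ici a, 0 ≤ deriv (deriv f) t + deriv f t) (ha : 0 < deriv f a) :
    ∀ t ∈ Ici a, 0 < deriv f t := by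
  have hmono : MonotoneOn (fun t ↦ Real.exp t * deriv f t) (Ici a) := by
    refine monotoneOn_Ici_of_hasDerivAt_nonneg
      (fun t ht ↦ (Real.hasDerivAt_exp t).mul (hdf' t ht).hasDerivAt) fun t ht ↦ ?_
    rw [← mul_add, add_comm]
    exact mul_nonneg (Real.exp_pos t).le (hf t ht)
  intro t ht
  have hle : Real.exp a * deriv f a ≤ Real.exp t * deriv f t := hmono self_mem_Ici ht ht
  exact pos_of_mul_pos_right ((mul_pos (Real.exp_pos a) ha).trans_le hle) (Real.exp_pos t).le

/-- `f' + f - c t` is nondecreasing, so `f' ≥ f'(a) + f(a) - M + c (t - a)` grows without bound. -/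
lemma exists_deriv_pos_of_bddAbove {c M : ℝ} (hc : 0 < c)
    (hdf : ∀ t ∈ Ici a, DifferentiableAt ℝ f t)
    (hdf' : ∀ t ∈ Ici a, DifferentiableAt ℝ (deriv f) t)
    (hf : ∀ t ∈ Ici a, c ≤ deriv (deriv f) t + deriv f t) (hM : ∀ t ∈ Ici a, f t ≤ M) :
    ∃ t ∈ Ici a, 0 < deriv f t := by
  have hmono : MonotoneOn (fun t ↦ deriv f t + f t - c * t) (Ici a) := by
    refine monotoneOn_Ici_of_hasDerivAt_nonneg
      (fun t ht ↦ (((hdf' t ht).hasDerivAt.add (hdf t ht).hasDerivAt).sub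
        ((hasDerivAt_id t).const_mul c))) fun t ht ↦ ?_
    simpa using hf t ht
  set K := M - f a - deriv f a
  obtain ⟨t, hta, hct⟩ : ∃ t ∈ Ici a, K < c * (t - a) := by
    refine ⟨a + (|K| + 1) / c, mem_Ici.2 (le_add_of_nonneg_right (by positivity)), ?_⟩
    rw [add_sub_cancel_left, mul_div_cancel₀ _ hc.ne']
    linarith [le_abs_self K]
  refine ⟨t, hta, ?_⟩
  have hle : deriv f a + f a - c * a ≤ deriv f t + f t - c * t := hmono self_mem_Ici hta hta
  linarith [hM t hta]

end DampedOscillator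

theorem stmt_3_general (t₀ : ℝ) (h : ℝ → ℝ)
    (hpos : ∀ t ∈ Ici t₀, 0 < h t)
    (hdiff : ∀ t ∈ Ici t₀, DifferentiableAt ℝ h t)
    (hdiff' : ∀ t ∈ Ici t₀, DifferentiableAt ℝ (deriv h) t)
    (hode : ∀ t ∈ Ici t₀, (h t) ^ 3 * (deriv (deriv h) t + deriv h t) = 1) :
    ∃ T ∈ Ici t₀, ∀ t, T < t → 0 < deriv h t := by
  have hrhs (t : ℝ) (ht : t ∈ Ici t₀) : deriv (deriv h) t + deriv h t = 1 / h t ^ 3 :=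
    eq_one_div_of_mul_eq_one_right (hode t ht)
  obtain ⟨T, hT, hT_pos⟩ : ∃ T ∈ Ici t₀, 0 < deriv h T := by
    by_contra! hnonpos
    have hanti := antitoneOn_Ici_of_deriv_nonpos hdiff hnonpos
    have hlow (t : ℝ) (ht : t ∈ Ici t₀) :
        1 / h t₀ ^ 3 ≤ deriv (deriv h) t + deriv h t := by
      rw [hrhs t ht]
      have := hpos t ht
      gcongr
      exact hanti self_mem_Ici ht ht
    have := hpos t₀ self_mem_Ici
    obtain ⟨t, ht, ht_pos⟩ := exists_deriv_pos_of_bddAbove (by positivity) hdiff hdiff' hlow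
      (fun t ht ↦ hanti self_mem_Ici ht ht)
    exact (hnonpos t ht).not_gt ht_pos
  have hT_ode : ∀ t ∈ Ici T, 0 ≤ deriv (deriv h) t + deriv h t := fun t ht ↦ by
    rw [hrhs t (mem_Ici.2 (hT.trans ht))]
    have := hpos t (mem_Ici.2 (hT.trans ht))
    positivity
  exact ⟨T, hT, fun t ht ↦ deriv_pos_of_deriv_deriv_add_deriv_nonneg
    (fun s hs ↦ hdiff' s (mem_Ici.2 (hT.trans hs))) hT_ode hT_pos t ht.le⟩

/-- If `h` solves `h³(h'' + h') = 1` on `[t₀,∞)` with `h t₀ = h₀ > 0`, then there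
exists `T ≥ t₀` such that `h'(t) > 0` for all `t > T`. -/
theorem stmt_3 (t₀ h₀ : ℝ) (h : ℝ → ℝ) (hh₀ : 0 < h₀) (hinit : h t₀ = h₀)
    (hpos : ∀ t ∈ Ici t₀, 0 < h t)
    (hdiff : ∀ t ∈ Ici t₀, DifferentiableAt ℝ h t)
    (hdiff' : ∀ t ∈ Ici t₀, DifferentiableAt ℝ (deriv h) t)
    (hode : ∀ t ∈ Ici t₀, (h t) ^ 3 * (deriv (deriv h) t + deriv h t) = 1) :
    ∃ T ∈ Ici t₀, ∀ t, T < t → 0 < deriv h t :=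
  stmt_3_general t₀ h hpos hdiff hdiff' hode
end

section
/- For every n ∈ ℕ and δ > 0, ν ∈ ℝ, the identity e^{−1/z} ∫_z^δ s^{ν−2} e^{1/s} ds = −e^{1/δ − 1/z} Σ_{j=0}^{n−1} (ν)_j δ^{ν+j} + Σ_{j=0}^{n−1} (ν)_j z^{ν+j} + (ν)_n e^{−1/z} ∫_z^δ s^{ν+n−2} e^{1/s} ds holds for all z ∈ (0, δ). -/
open Set Filter Finset

lemma pos_of_mem_uIcc {a b x : ℝ} (ha : 0 < a) (hb : 0 < b) (hx : x ∈ uIcc a b) : 0 < x :=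
  lt_of_lt_of_le (lt_min ha hb) hx.1

lemma intervalIntegrable_rpow_mul_exp_inv (μ : ℝ) {a b : ℝ} (ha : 0 < a) (hb : 0 < b) :
    IntervalIntegrable (fun s => s ^ μ * Real.exp (1 / s)) MeasureTheory.volume a b := by
  refine ContinuousOn.intervalIntegrable fun x hx => ?_
  have hx0 := (pos_of_mem_uIcc ha hb hx).ne'
  exact ((Real.continuousAt_rpow_const x μ (Or.inl hx0)).mul
    (Real.continuous_exp.continuousAt.comp (continuousAt_const.div continuousAt_id hx0)))
    |>.continuousWithinAt

lemma hasDerivAt_rpow_mul_exp_inv (μ : ℝ) {x : ℝ} (hx : 0 < x) :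
    HasDerivAt (fun s => s ^ μ * Real.exp (1 / s))
      (μ * (x ^ (μ - 1) * Real.exp (1 / x)) - x ^ (μ - 2) * Real.exp (1 / x)) x := by
  have hpow : HasDerivAt (fun s : ℝ => s ^ μ) (μ * x ^ (μ - 1)) x :=
    Real.hasDerivAt_rpow_const (Or.inl hx.ne')
  have hexp : HasDerivAt (fun s : ℝ => Real.exp (1 / s)) (Real.exp (1 / x) * -(x ^ 2)⁻¹) x := by
    simpa only [one_div] using (hasDerivAt_inv hx.ne').exp
  refine (hpow.mul hexp).congr_deriv ?_
  rw [Real.rpow_sub hx, Real.rpow_sub hx, Real.rpow_one, Real.rpow_two]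
  field_simp
  ring

/-- One integration by parts, via `s^(μ-2) e^(1/s) = -s^μ (e^(1/s))'`. -/
lemma integral_rpow_sub_two_mul_exp_inv (μ : ℝ) {a b : ℝ} (ha : 0 < a) (hb : 0 < b) :
    ∫ s in a..b, s ^ (μ - 2) * Real.exp (1 / s)
      = a ^ μ * Real.exp (1 / a) - b ^ μ * Real.exp (1 / b)
        + μ * ∫ s in a..b, s ^ (μ - 1) * Real.exp (1 / s) := by
  have hint₁ := intervalIntegrable_rpow_mul_exp_inv (μ - 1) ha hb
  have hint₂ := intervalIntegrable_rpow_mul_exp_inv (μ - 2) ha hb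
  have hftc := intervalIntegral.integral_eq_sub_of_hasDerivAt
    (fun x hx => hasDerivAt_rpow_mul_exp_inv μ (pos_of_mem_uIcc ha hb hx))
    ((hint₁.const_mul μ).sub hint₂)
  rw [intervalIntegral.integral_sub (hint₁.const_mul μ) hint₂,
    intervalIntegral.integral_const_mul] at hftc
  linarith

theorem stmt_9_general (n : ℕ) (δ ν : ℝ) (z : ℝ) (hz : z ∈ Ioo 0 δ) :
    Real.exp (-(1 / z)) * ∫ s in z..δ, s ^ (ν - 2) * Real.exp (1 / s)
      = -Real.exp (1 / δ - 1 / z) *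
          (∑ j ∈ range n, (∏ i ∈ range j, (ν + i)) * δ ^ (ν + j)) +
        (∑ j ∈ range n, (∏ i ∈ range j, (ν + i)) * z ^ (ν + j)) +
        (∏ i ∈ range n, (ν + i)) * Real.exp (-(1 / z)) *
          ∫ s in z..δ, s ^ (ν + n - 2) * Real.exp (1 / s) := by
  obtain ⟨hz, hzδ⟩ := hz
  induction n with
  | zero => simp
  | succ n ih =>
    have hibp := integral_rpow_sub_two_mul_exp_inv (ν + n) hz (hz.trans hzδ)
    rw [show ν + n - 1 = ν + (n + 1 : ℕ) - 2 by push_cast; ring] at hibp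
    rw [ih, hibp, sum_range_succ, sum_range_succ, prod_range_succ, Real.exp_sub, Real.exp_neg]
    field_simp
    ring

/-- For every `n ∈ ℕ`, `δ > 0`, `ν ∈ ℝ` and `z ∈ (0, δ)`,
`e^{−1/z} ∫_z^δ s^{ν−2} e^{1/s} ds
  = −e^{1/δ−1/z} Σ_{j<n} (ν)_j δ^{ν+j} + Σ_{j<n} (ν)_j z^{ν+j}
    + (ν)_n e^{−1/z} ∫_z^δ s^{ν+n−2} e^{1/s} ds`. -/
theorem stmt_9 (n : ℕ) (δ ν : ℝ) (hδ : 0 < δ) (z : ℝ) (hz : z ∈ Ioo 0 δ) :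
    Real.exp (-(1 / z)) * ∫ s in z..δ, s ^ (ν - 2) * Real.exp (1 / s)
      = -Real.exp (1 / δ - 1 / z) *
          (∑ j ∈ range n, (∏ i ∈ range j, (ν + i)) * δ ^ (ν + j)) +
        (∑ j ∈ range n, (∏ i ∈ range j, (ν + i)) * z ^ (ν + j)) +
        (∏ i ∈ range n, (ν + i)) * Real.exp (-(1 / z)) *
          ∫ s in z..δ, s ^ (ν + n - 2) * Real.exp (1 / s) :=
  stmt_9_general n δ ν z hz
end
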